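/- arXiv:2605.15450 — 2 statements merged into one kernel-verified Lean document; each statement's English description precedes it below -/
import Mathlib

section
/- (Discriminability Gap Theorem) Let δ_L, δ_R be nonzero vectors in ℝ^n with δ_L + δ_R ≠ 0, let W_L, W_R > 0, and define D_L = ‖δ_L‖²/W_L, D_R = ‖δ_R‖²/W_R, D_I = ‖δ_L + δ_R‖²/(W_L + W_R), ρ = ⟨δ_L, δ_R⟩/(‖δ_L‖‖δ_R‖), ξ = ‖δ_L‖‖δ_R‖/(‖δ_L‖² + ‖δ_R‖²). Then D_L + D_R ≥ D_I · (1 + 2ξ)/(1 + 2ρξ). -/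
open scoped RealInnerProductSpace

theorem discriminability_gap {n : ℕ} (u v : EuclideanSpace ℝ (Fin n))
    (hu : u ≠ 0) (hv : v ≠ 0) (huv : u + v ≠ 0)
    (WL WR : ℝ) (hL : 0 < WL) (hR : 0 < WR) :
    ‖u‖ ^ 2 / WL + ‖v‖ ^ 2 / WR ≥
      ‖u + v‖ ^ 2 / (WL + WR) *
        ((1 + 2 * (‖u‖ * ‖v‖ / (‖u‖ ^ 2 + ‖v‖ ^ 2))) /
          (1 + 2 * (⟪u, v⟫ / (‖u‖ * ‖v‖)) * (‖u‖ * ‖v‖ / (‖u‖ ^ 2 + ‖v‖ ^ 2)))) := by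
  have hx : 0 < ‖u‖ := norm_pos_iff.mpr hu
  have hy : 0 < ‖v‖ := norm_pos_iff.mpr hv
  have hs : ‖u + v‖ ^ 2 = ‖u‖ ^ 2 + 2 * ⟪u, v⟫ + ‖v‖ ^ 2 := norm_add_sq_real u v
  have hsp : 0 < ‖u + v‖ ^ 2 := pow_pos (norm_pos_iff.mpr huv) 2
  set x := ‖u‖ with hxdef
  set y := ‖v‖ with hydef
  set c := ⟪u, v⟫ with hcdef
  have hxy : (0:ℝ) < x ^ 2 + y ^ 2 := by positivity
  have hden : 1 + 2 * (c / (x * y)) * (x * y / (x ^ 2 + y ^ 2))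
      = ‖u + v‖ ^ 2 / (x ^ 2 + y ^ 2) := by
    rw [hs]; field_simp; ring
  have key : ‖u + v‖ ^ 2 / (WL + WR) *
        ((1 + 2 * (x * y / (x ^ 2 + y ^ 2))) /
          (1 + 2 * (c / (x * y)) * (x * y / (x ^ 2 + y ^ 2))))
      = (x + y) ^ 2 / (WL + WR) := by
    rw [hden]
    have hne : ‖u + v‖ ^ 2 ≠ 0 := ne_of_gt hsp
    field_simp
    ring
  rw [key]
  have hdiff : x ^ 2 / WL + y ^ 2 / WR - (x + y) ^ 2 / (WL + WR)
      = (x * WR - y * WL) ^ 2 / (WL * WR * (WL + WR)) := by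
    field_simp
    ring
  have hpos : 0 ≤ (x * WR - y * WL) ^ 2 / (WL * WR * (WL + WR)) := by positivity
  linarith [hdiff, hpos]
end

section
/- (Combined chain) For nonzero δ_L, δ_R ∈ ℝ^n with δ_L + δ_R ≠ 0 and W_L, W_R > 0: ‖δ_L‖²/W_L + ‖δ_R‖²/W_R ≥ (‖δ_L‖² + ‖δ_R‖²)/(W_L + W_R) = [‖δ_L + δ_R‖²/(W_L + W_R)] · 1/(1 + 2ρξ) ≥ [‖δ_L + δ_R‖²/(W_L + W_R)] · 1/(1 + 2ξ), where ρ = ⟨δ_L,δ_R⟩/(‖δ_L‖‖δ_R‖) and ξ = ‖δ_L‖‖δ_R‖/(‖δ_L‖²+‖δ_R‖²). -/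
open scoped RealInnerProductSpace

theorem combined_chain {n : ℕ} (u v : EuclideanSpace ℝ (Fin n))
    (hu : u ≠ 0) (hv : v ≠ 0) (huv : u + v ≠ 0)
    (WL WR : ℝ) (hL : 0 < WL) (hR : 0 < WR) :
    ‖u‖ ^ 2 / WL + ‖v‖ ^ 2 / WR ≥ (‖u‖ ^ 2 + ‖v‖ ^ 2) / (WL + WR) ∧
    (‖u‖ ^ 2 + ‖v‖ ^ 2) / (WL + WR) =
      ‖u + v‖ ^ 2 / (WL + WR) *
        (1 / (1 + 2 * (⟪u, v⟫ / (‖u‖ * ‖v‖)) * (‖u‖ * ‖v‖ / (‖u‖ ^ 2 + ‖v‖ ^ 2)))) ∧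
    ‖u + v‖ ^ 2 / (WL + WR) *
        (1 / (1 + 2 * (⟪u, v⟫ / (‖u‖ * ‖v‖)) * (‖u‖ * ‖v‖ / (‖u‖ ^ 2 + ‖v‖ ^ 2)))) ≥
      ‖u + v‖ ^ 2 / (WL + WR) * (1 / (1 + 2 * (‖u‖ * ‖v‖ / (‖u‖ ^ 2 + ‖v‖ ^ 2)))) := by
  have hnu : 0 < ‖u‖ := norm_pos_iff.mpr hu
  have hnv : 0 < ‖v‖ := norm_pos_iff.mpr hv
  have hnuv : 0 < ‖u + v‖ := norm_pos_iff.mpr huv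
  have hS : 0 < ‖u‖ ^ 2 + ‖v‖ ^ 2 := by positivity
  have hexp : ‖u + v‖ ^ 2 = ‖u‖ ^ 2 + ‖v‖ ^ 2 + 2 * ⟪u, v⟫ := by
    rw [@norm_add_sq_real]; ring
  have hrho : 2 * (⟪u, v⟫ / (‖u‖ * ‖v‖)) * (‖u‖ * ‖v‖ / (‖u‖ ^ 2 + ‖v‖ ^ 2))
      = 2 * ⟪u, v⟫ / (‖u‖ ^ 2 + ‖v‖ ^ 2) := by
    field_simp
  have hden : 1 + 2 * ⟪u, v⟫ / (‖u‖ ^ 2 + ‖v‖ ^ 2)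
      = ‖u + v‖ ^ 2 / (‖u‖ ^ 2 + ‖v‖ ^ 2) := by
    rw [hexp]; field_simp
  have hdenpos : 0 < 1 + 2 * ⟪u, v⟫ / (‖u‖ ^ 2 + ‖v‖ ^ 2) := by
    rw [hden]; positivity
  refine ⟨?_, ?_, ?_⟩
  · rw [ge_iff_le, div_add_div _ _ (ne_of_gt hL) (ne_of_gt hR),
      div_le_div_iff₀ (by positivity) (by positivity)]
    nlinarith [mul_nonneg (sq_nonneg ‖u‖) (sq_nonneg WR),
      mul_nonneg (sq_nonneg ‖v‖) (sq_nonneg WL)]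
  · rw [hrho, hden]
    rw [one_div_div (‖u + v‖ ^ 2) (‖u‖ ^ 2 + ‖v‖ ^ 2)]
    have h4 : ‖u + v‖ ^ 2 ≠ 0 := by positivity
    field_simp
  · rw [hrho]
    have hcs : ⟪u, v⟫ ≤ ‖u‖ * ‖v‖ := real_inner_le_norm u v
    have h2 : 1 + 2 * ⟪u, v⟫ / (‖u‖ ^ 2 + ‖v‖ ^ 2)
        ≤ 1 + 2 * (‖u‖ * ‖v‖ / (‖u‖ ^ 2 + ‖v‖ ^ 2)) := by
      rw [mul_div_assoc]
      gcongr
    exact mul_le_mul_of_nonneg_left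
      (one_div_le_one_div_of_le hdenpos h2) (by positivity)
end
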